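/- For natural numbers k, m with m ≤ k ≤ n/2 and λ ⊢ n with |λ*| = m: the number of standard set-partition tableaux of shape λ with content a set partition of {1,...,k} equals ∑_t S(k,t)·C(t,m)·f^{λ*}, i.e., |SSPT(λ,k)| = (∑_t S(k,t)C(t,m))·f^{λ*}, where f^{λ*} is the number of standard Young tableaux of shape λ*. -/

import Mathlib

/-- Stirling numbers of the second kind, via the standard recurrence. -/
def stirling2 : ℕ → ℕ → ℕ
  | 0, 0 => 1
  | 0, _ + 1 => 0
  | _ + 1, 0 => 0
  | n + 1, t + 1 => (t + 1) * stirling2 n (t + 1) + stirling2 n t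

/-- `P` is a set partition of `Fin k`. -/
def IsSetPartition {k : ℕ} (P : Finset (Finset (Fin k))) : Prop :=
  (∀ B ∈ P, B.Nonempty) ∧ ∀ x : Fin k, ∃! B, B ∈ P ∧ x ∈ B

/-- The maximal entry of a block, with `Fin k` identified with `{1,…,k}`. -/
def blockMax {k : ℕ} (B : Finset (Fin k)) : ℕ := B.sup (fun x => (x : ℕ) + 1)

/-- The Young diagram of an integer partition. -/
def shapeOf {n : ℕ} (lam : Nat.Partition n) : YoungDiagram :=
  YoungDiagram.ofRowLens (lam.parts.sort (· ≥ ·)) (List.sortedGE_iff_pairwise.mpr (Multiset.pairwise_sort _ _))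

/-- The cells of the skew shape `λ/[n-t]`: the diagram of `λ` with the first `n - t`
cells of the first row removed. -/
def skewCells {n : ℕ} (lam : Nat.Partition n) (t : ℕ) : Finset (ℕ × ℕ) :=
  (shapeOf lam).cells.filter (fun c => ¬(c.1 = 0 ∧ c.2 < n - t))

/-- `f^μ`: the number of standard Young tableaux of shape `μ`. -/
noncomputable def fSYT (m : ℕ) (μ : Nat.Partition m) : ℕ :=
  Nat.card {T : {c : ℕ × ℕ // c ∈ shapeOf μ} ≃ Fin m //
    ∀ c d : {c : ℕ × ℕ // c ∈ shapeOf μ},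
      (c.1.1 = d.1.1 → c.1.2 < d.1.2 → T c < T d) ∧
      (c.1.2 = d.1.2 → c.1.1 < d.1.1 → T c < T d)}

/-! ## Basic lemmas on set partitions -/

lemma blockMax_exists {k : ℕ} {B : Finset (Fin k)} (hB : B.Nonempty) :
    ∃ x ∈ B, (x : ℕ) + 1 = blockMax B := by
  obtain ⟨b, hb, hb'⟩ := Finset.exists_mem_eq_sup B hB (fun x : Fin k => (x : ℕ) + 1)
  exact ⟨b, hb, hb'.symm⟩

lemma blockMax_injOn {k : ℕ} {P : Finset (Finset (Fin k))} (hP : IsSetPartition P) :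
    ∀ B ∈ P, ∀ B' ∈ P, blockMax B = blockMax B' → B = B' := by
  intro B hB B' hB' h
  obtain ⟨x, hx, hx'⟩ := blockMax_exists (hP.1 B hB)
  obtain ⟨y, hy, hy'⟩ := blockMax_exists (hP.1 B' hB')
  have hxy : x = y := by
    have : (x : ℕ) = (y : ℕ) := by omega
    exact Fin.ext this
  obtain ⟨U, _, hU⟩ := hP.2 x
  rw [hU B ⟨hB, hx⟩, hU B' ⟨hB', hxy ▸ hy⟩]

lemma pairwiseDisjoint_of_isSetPartition {k : ℕ} {P : Finset (Finset (Fin k))}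
    (hP : IsSetPartition P) :
    ∀ B ∈ P, ∀ B' ∈ P, B ≠ B' → Disjoint B B' := by
  intro B hB B' hB' hne
  rw [Finset.disjoint_left]
  intro x hx hx'
  obtain ⟨U, _, hU⟩ := hP.2 x
  exact hne ((hU B ⟨hB, hx⟩).trans (hU B' ⟨hB', hx'⟩).symm)

lemma card_le_of_isSetPartition {k : ℕ} {P : Finset (Finset (Fin k))}
    (hP : IsSetPartition P) : P.card ≤ k := by
  classical
  have hdisj : (P : Set (Finset (Fin k))).PairwiseDisjoint id := by
    intro B hB B' hB' hne
    exact pairwiseDisjoint_of_isSetPartition hP B hB B' hB' hne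
  have hcover : P.biUnion id = Finset.univ := by
    ext x
    simp only [Finset.mem_biUnion, Finset.mem_univ, iff_true, id]
    obtain ⟨B, ⟨hB, hxB⟩, _⟩ := hP.2 x
    exact ⟨B, hB, hxB⟩
  have hk : ∑ B ∈ P, B.card = k := by
    have h := Finset.card_biUnion
      (fun B (hB : B ∈ P) B' hB' hne => hdisj hB hB' hne)
    rw [hcover, Finset.card_univ, Fintype.card_fin] at h
    simpa [id] using h.symm
  calc P.card = ∑ _B ∈ P, 1 := by simp
    _ ≤ ∑ B ∈ P, B.card := Finset.sum_le_sum (fun B hB => (hP.1 B hB).card_pos)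
    _ = k := hk

/-! ## Shape lemmas -/

lemma sort_parts_sum {n : ℕ} (lam : Nat.Partition n) :
    (lam.parts.sort (· ≥ ·)).sum = n := by
  have : ((lam.parts.sort (· ≥ ·) : List ℕ) : Multiset ℕ) = lam.parts :=
    lam.parts.sort_eq _
  calc (lam.parts.sort (· ≥ ·)).sum
      = (((lam.parts.sort (· ≥ ·) : List ℕ)) : Multiset ℕ).sum := by
        rw [Multiset.sum_coe]
    _ = lam.parts.sum := by rw [this]
    _ = n := lam.parts_sum

lemma sort_parts_eq_nil {n : ℕ} (lam : Nat.Partition n) (hn : n = 0) :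
    lam.parts.sort (· ≥ ·) = [] := by
  rcases h : lam.parts.sort (· ≥ ·) with _ | ⟨a, t⟩
  · rfl
  · exfalso
    have ha : a ∈ lam.parts := by
      rw [← Multiset.mem_sort (· ≥ ·), h]; simp
    have hpos : 0 < a := lam.parts_pos ha
    have hs := sort_parts_sum lam
    rw [h, List.sum_cons] at hs
    omega

lemma sort_parts_ne_nil {n : ℕ} (lam : Nat.Partition n) (hn : n ≠ 0) :
    lam.parts.sort (· ≥ ·) ≠ [] := by
  intro h
  have hs := sort_parts_sum lam
  rw [h] at hs
  simp at hs
  omega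

section Geometry

variable {k n m : ℕ} (lam : Nat.Partition n) (mu : Nat.Partition m)
  (hstar : (lam.parts.sort (· ≥ ·)).tail = mu.parts.sort (· ≥ ·))

include hstar

lemma sort_lam_eq (hn : n ≠ 0) :
    lam.parts.sort (· ≥ ·) = (n - m) :: mu.parts.sort (· ≥ ·) := by
  rcases h : lam.parts.sort (· ≥ ·) with _ | ⟨a, t⟩
  · exact absurd h (sort_parts_ne_nil lam hn)
  · have hs := sort_parts_sum lam
    rw [h, List.sum_cons] at hs
    have ht : t = mu.parts.sort (· ≥ ·) := by rw [← hstar, h]; rfl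
    have htm : t.sum = m := by rw [ht]; exact sort_parts_sum mu
    have ha : a = n - m := by omega
    rw [ha, ht]

lemma mem_shape_row_zero {j : ℕ} :
    (0, j) ∈ shapeOf lam ↔ j < n - m := by
  by_cases hn : n = 0
  · rw [shapeOf, YoungDiagram.mem_ofRowLens, sort_parts_eq_nil lam hn]
    subst hn
    simp
  · rw [shapeOf, YoungDiagram.mem_ofRowLens]
    have := sort_lam_eq lam mu hstar hn
    constructor
    · rintro ⟨h1, h2⟩
      rw [List.getElem_of_eq this] at h2
      simpa using h2
    · intro hj
      have hlen : (0 : ℕ) < (lam.parts.sort (· ≥ ·)).length := by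
        rw [this]; simp
      refine ⟨hlen, ?_⟩
      rw [List.getElem_of_eq this]
      simpa using hj

lemma mem_shape_row_succ {i j : ℕ} :
    (i + 1, j) ∈ shapeOf lam ↔ (i, j) ∈ shapeOf mu := by
  rw [shapeOf, shapeOf, YoungDiagram.mem_ofRowLens, YoungDiagram.mem_ofRowLens, ← hstar]
  constructor
  · rintro ⟨h1, h2⟩
    have hlen : i < (lam.parts.sort (· ≥ ·)).tail.length := by
      rw [List.length_tail]; omega
    refine ⟨hlen, ?_⟩
    rw [List.getElem_tail]
    exact h2
  · rintro ⟨h1, h2⟩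
    rw [List.length_tail] at h1
    have hlen : i + 1 < (lam.parts.sort (· ≥ ·)).length := by omega
    refine ⟨hlen, ?_⟩
    rw [List.getElem_tail] at h2
    exact h2

omit hstar

lemma col_lt_of_mem_shape {m : ℕ} {mu : Nat.Partition m} {i j : ℕ}
    (h : (i, j) ∈ shapeOf mu) : j < m := by
  rw [shapeOf, YoungDiagram.mem_ofRowLens] at h
  obtain ⟨h1, h2⟩ := h
  have hmem : (mu.parts.sort (· ≥ ·))[(i, j).1] ∈ mu.parts := by
    rw [← Multiset.mem_sort (· ≥ ·)]
    exact List.getElem_mem h1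
  have hle : (mu.parts.sort (· ≥ ·))[(i, j).1] ≤ m := by
    have := Multiset.single_le_sum (fun x _ => Nat.zero_le x) _ hmem
    rwa [mu.parts_sum] at this
  omega

end Geometry

lemma sum_range_getD (w : List ℕ) : ∑ i ∈ Finset.range w.length, w.getD i 0 = w.sum := by
  induction w with
  | nil => simp
  | cons a t ih =>
    rw [List.length_cons, Finset.sum_range_succ']
    simp only [List.getD_cons_succ, List.getD_cons_zero, List.sum_cons, ih]
    omega

lemma card_cells_ofRowLens (w : List ℕ) (hw : w.SortedGE) :
    (YoungDiagram.ofRowLens w hw).cells.card = w.sum := by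
  classical
  have hset : (YoungDiagram.ofRowLens w hw).cells =
      (Finset.range w.length).biUnion
        (fun i => (Finset.range (w.getD i 0)).image (fun j => (i, j))) := by
    ext c
    obtain ⟨i, j⟩ := c
    simp only [Finset.mem_biUnion, Finset.mem_range, Finset.mem_image,
      YoungDiagram.mem_cells, YoungDiagram.mem_ofRowLens]
    constructor
    · rintro ⟨h1, h2⟩
      exact ⟨i, h1, ⟨j, by rwa [List.getD_eq_getElem _ _ h1], rfl⟩⟩
    · rintro ⟨i', hi', j', hj', h⟩
      obtain ⟨rfl, rfl⟩ := Prod.mk.injEq .. ▸ h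
      exact ⟨hi', by rwa [← List.getD_eq_getElem _ _ hi']⟩
  rw [hset, Finset.card_biUnion]
  · calc ∑ i ∈ Finset.range w.length,
        ((Finset.range (w.getD i 0)).image (fun j => (i, j))).card
        = ∑ i ∈ Finset.range w.length, w.getD i 0 := by
          refine Finset.sum_congr rfl (fun i _ => ?_)
          rw [Finset.card_image_of_injective _ (fun a b hab => by
            simpa using hab), Finset.card_range]
    _ = w.sum := sum_range_getD w
  · intro i _ i' _ hne
    simp only [Finset.disjoint_left, Finset.mem_image, Finset.mem_range]
    rintro ⟨a, b⟩ ⟨j, _, h⟩ ⟨j', _, h'⟩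
    obtain ⟨rfl, -⟩ := Prod.mk.injEq .. ▸ h
    obtain ⟨rfl, -⟩ := Prod.mk.injEq .. ▸ h'
    exact hne rfl

section Skew

variable {k n m : ℕ} (lam : Nat.Partition n) (mu : Nat.Partition m)
  (hstar : (lam.parts.sort (· ≥ ·)).tail = mu.parts.sort (· ≥ ·))

include hstar

lemma mem_skewCells {t : ℕ} {c : ℕ × ℕ} :
    c ∈ skewCells lam t ↔
      ((c.1 = 0 ∧ n - t ≤ c.2 ∧ c.2 < n - m) ∨ (0 < c.1 ∧ (c.1 - 1, c.2) ∈ shapeOf mu)) := by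
  obtain ⟨i, j⟩ := c
  rw [skewCells, Finset.mem_filter, YoungDiagram.mem_cells]
  cases i with
  | zero =>
    rw [mem_shape_row_zero lam mu hstar]
    constructor
    · rintro ⟨h1, h2⟩
      left
      refine ⟨rfl, ?_, h1⟩
      by_contra hlt
      exact h2 ⟨rfl, by omega⟩
    · rintro (⟨-, h2, h3⟩ | ⟨h0, -⟩)
      · exact ⟨h3, fun h => absurd h.2 (by omega)⟩
      · exact absurd h0 (by omega)
  | succ i =>
    rw [mem_shape_row_succ lam mu hstar]
    simp

omit hstar

lemma card_cells_shapeOf : (shapeOf mu).cells.card = m := by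
  rw [shapeOf, card_cells_ofRowLens, sort_parts_sum]

end Skew

section FillDefs

variable {k m : ℕ}

noncomputable def blockIdx (S : Finset (Finset (Fin k)))
    (hmax : (S.image blockMax).card = m) (b : {B : Finset (Fin k) // B ∈ S}) : Fin m :=
  ((S.image blockMax).orderIsoOfFin hmax).symm
    ⟨blockMax b.1, Finset.mem_image_of_mem _ b.2⟩

lemma blockIdx_lt_iff {S : Finset (Finset (Fin k))}
    {hmax : (S.image blockMax).card = m} (b b' : {B : Finset (Fin k) // B ∈ S}) :
    blockIdx S hmax b < blockIdx S hmax b' ↔ blockMax b.1 < blockMax b'.1 := by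
  rw [blockIdx, blockIdx, OrderIso.lt_iff_lt, Subtype.mk_lt_mk]

lemma blockIdx_surjective {S : Finset (Finset (Fin k))}
    {hmax : (S.image blockMax).card = m} :
    Function.Surjective (blockIdx S hmax) := by
  intro v
  set x := (S.image blockMax).orderIsoOfFin hmax v with hx
  obtain ⟨B, hB, hBx⟩ := Finset.mem_image.1 x.2
  refine ⟨⟨B, hB⟩, ?_⟩
  rw [blockIdx]
  have : (⟨blockMax B, Finset.mem_image_of_mem _ hB⟩ : {y // y ∈ S.image blockMax}) = x :=
    Subtype.ext hBx
  rw [this, hx, OrderIso.symm_apply_apply]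

lemma blockIdx_injective {S : Finset (Finset (Fin k))}
    {hmax : (S.image blockMax).card = m}
    (hinj : ∀ B ∈ S, ∀ B' ∈ S, blockMax B = blockMax B' → B = B') :
    Function.Injective (blockIdx S hmax) := by
  intro b b' h
  have h1 := blockIdx_lt_iff (hmax := hmax) b b'
  have h2 := blockIdx_lt_iff (hmax := hmax) b' b
  rw [h] at h1
  have : blockMax b.1 = blockMax b'.1 := by
    rcases lt_trichotomy (blockMax b.1) (blockMax b'.1) with h' | h' | h'
    · exact absurd (h1.2 h') (lt_irrefl _)
    · exact h'
    · exact absurd (h2.2 h') (by rw [h]; exact lt_irrefl _)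
  exact Subtype.ext (hinj _ b.2 _ b'.2 this)

def rankIn (P S : Finset (Finset (Fin k))) (B : Finset (Fin k)) : ℕ :=
  ((P \ S).filter (fun B' => blockMax B' < blockMax B)).card

lemma rankIn_lt {P S : Finset (Finset (Fin k))} {B : Finset (Fin k)} (hB : B ∈ P \ S) :
    rankIn P S B < (P \ S).card := by
  apply Finset.card_lt_card
  rw [Finset.ssubset_iff_of_subset (Finset.filter_subset _ _)]
  exact ⟨B, hB, by simp⟩

lemma rankIn_strictMono {P S : Finset (Finset (Fin k))} {B B' : Finset (Fin k)}
    (hB : B ∈ P \ S) (hlt : blockMax B < blockMax B') :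
    rankIn P S B < rankIn P S B' := by
  apply Finset.card_lt_card
  constructor
  · intro C hC
    rw [Finset.mem_filter] at hC ⊢
    exact ⟨hC.1, hC.2.trans hlt⟩
  · intro hsub
    have := hsub (Finset.mem_filter.2 ⟨hB, hlt⟩)
    rw [Finset.mem_filter] at this
    exact absurd this.2 (lt_irrefl _)

end FillDefs

noncomputable def fillOf {k m : ℕ} (n : ℕ) {mu : Nat.Partition m}
    (P S : Finset (Finset (Fin k)))
    (τ : {c : ℕ × ℕ // c ∈ shapeOf mu} ≃ Fin m)
    (hmax : (S.image blockMax).card = m)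
    (B : {B : Finset (Fin k) // B ∈ P}) : ℕ × ℕ :=
  if h : B.1 ∈ S then
    ((τ.symm (blockIdx S hmax ⟨B.1, h⟩)).1.1 + 1,
      (τ.symm (blockIdx S hmax ⟨B.1, h⟩)).1.2)
  else (0, n - P.card + rankIn P S B.1)

theorem fillOf_cond {k n m : ℕ} {lam : Nat.Partition n} {mu : Nat.Partition m}
    {P S : Finset (Finset (Fin k))}
    {τ : {c : ℕ × ℕ // c ∈ shapeOf mu} ≃ Fin m}
    (hstar : (lam.parts.sort (· ≥ ·)).tail = mu.parts.sort (· ≥ ·))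
    (hm : m ≤ k) (hn : 2 * k ≤ n)
    (hP : IsSetPartition P) (hS : S ⊆ P) (hScard : S.card = m)
    (hmax : (S.image blockMax).card = m)
    (hτ : ∀ c d : {c : ℕ × ℕ // c ∈ shapeOf mu},
      (c.1.1 = d.1.1 → c.1.2 < d.1.2 → τ c < τ d) ∧
      (c.1.2 = d.1.2 → c.1.1 < d.1.1 → τ c < τ d)) :
    Set.BijOn (fillOf n P S τ hmax) Set.univ ↑(skewCells lam P.card) ∧
    (∀ B B' : {B : Finset (Fin k) // B ∈ P},
      ((fillOf n P S τ hmax) B).1 = ((fillOf n P S τ hmax) B').1 →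
      ((fillOf n P S τ hmax) B).2 < ((fillOf n P S τ hmax) B').2 →
        blockMax B.1 < blockMax B'.1) ∧
    (∀ B B' : {B : Finset (Fin k) // B ∈ P},
      ((fillOf n P S τ hmax) B).2 = ((fillOf n P S τ hmax) B').2 →
      ((fillOf n P S τ hmax) B).1 < ((fillOf n P S τ hmax) B').1 →
        blockMax B.1 < blockMax B'.1) := by
  have hc1 : P.card ≤ k := card_le_of_isSetPartition hP
  have hc2 : m ≤ P.card := hScard ▸ Finset.card_le_card hS
  have hinjP := blockMax_injOn hP
  have hcardPS : (P \ S).card = P.card - m := by rw [Finset.card_sdiff_of_subset hS, hScard]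
  have hval_mem : ∀ (B : {B : Finset (Fin k) // B ∈ P}) (h : B.1 ∈ S),
      fillOf n P S τ hmax B =
        ((τ.symm (blockIdx S hmax ⟨B.1, h⟩)).1.1 + 1,
          (τ.symm (blockIdx S hmax ⟨B.1, h⟩)).1.2) := by
    intro B h; rw [fillOf, dif_pos h]
  have hval_not : ∀ (B : {B : Finset (Fin k) // B ∈ P}) (_ : B.1 ∉ S),
      fillOf n P S τ hmax B = (0, n - P.card + rankIn P S B.1) := by
    intro B h; rw [fillOf, dif_neg h]
  have hrank_mono : ∀ B B', B ∈ P \ S → B' ∈ P \ S →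
      rankIn P S B < rankIn P S B' → blockMax B < blockMax B' := by
    intro B B' hB hB' hlt
    rcases lt_trichotomy (blockMax B) (blockMax B') with h | h | h
    · exact h
    · exfalso
      have : B = B' := hinjP _ (Finset.mem_sdiff.1 hB).1 _ (Finset.mem_sdiff.1 hB').1 h
      rw [this] at hlt; exact absurd hlt (lt_irrefl _)
    · exact absurd (rankIn_strictMono hB' h) (by omega)
  have hrank_inj : ∀ B B', B ∈ P \ S → B' ∈ P \ S →
      rankIn P S B = rankIn P S B' → B = B' := by
    intro B B' hB hB' hr
    rcases lt_trichotomy (blockMax B) (blockMax B') with h | h | h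
    · exact absurd (rankIn_strictMono hB h) (by omega)
    · exact hinjP _ (Finset.mem_sdiff.1 hB).1 _ (Finset.mem_sdiff.1 hB').1 h
    · exact absurd (rankIn_strictMono hB' h) (by omega)
  refine ⟨⟨?_, ?_, ?_⟩, ?_, ?_⟩
  · -- MapsTo
    intro B _
    rw [Finset.mem_coe, mem_skewCells lam mu hstar]
    by_cases h : B.1 ∈ S
    · right
      rw [hval_mem B h]
      exact ⟨Nat.succ_pos _, (τ.symm (blockIdx S hmax ⟨B.1, h⟩)).2⟩
    · left
      rw [hval_not B h]
      have hr := rankIn_lt (Finset.mem_sdiff.2 ⟨B.2, h⟩)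
      rw [hcardPS] at hr
      exact ⟨rfl, by omega, by omega⟩
  · -- InjOn
    intro B _ B' _ heq
    by_cases h : B.1 ∈ S <;> by_cases h' : B'.1 ∈ S
    · rw [hval_mem B h, hval_mem B' h', Prod.mk.injEq] at heq
      have hcell : τ.symm (blockIdx S hmax ⟨B.1, h⟩) = τ.symm (blockIdx S hmax ⟨B'.1, h'⟩) := by
        apply Subtype.ext
        apply Prod.ext <;> omega
      have h5 := blockIdx_injective (fun C hC C' hC' hcc => hinjP _ (hS hC) _ (hS hC') hcc)
        (τ.symm.injective hcell)
      have h6 : B.1 = B'.1 := congrArg (fun x : {C : Finset (Fin k) // C ∈ S} => x.1) h5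
      exact Subtype.ext h6
    · rw [hval_mem B h, hval_not B' h', Prod.mk.injEq] at heq
      omega
    · rw [hval_not B h, hval_mem B' h', Prod.mk.injEq] at heq
      omega
    · rw [hval_not B h, hval_not B' h', Prod.mk.injEq] at heq
      exact Subtype.ext (hrank_inj _ _ (Finset.mem_sdiff.2 ⟨B.2, h⟩)
        (Finset.mem_sdiff.2 ⟨B'.2, h'⟩) (by omega))
  · -- SurjOn
    intro c hc
    rw [Finset.mem_coe, mem_skewCells lam mu hstar] at hc
    obtain ⟨ci, cj⟩ := c
    rcases hc with ⟨h0, h1, h2⟩ | ⟨hpos, hcell⟩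
    · -- first row
      have h0' : ci = 0 := h0
      have h1' : n - P.card ≤ cj := h1
      have h2' : cj < n - m := h2
      have hsurj := Finset.surj_on_of_inj_on_of_card_le
        (s := P \ S) (t := Finset.range ((P \ S).card))
        (fun B _ => rankIn P S B)
        (fun B hB => Finset.mem_range.2 (rankIn_lt hB))
        (fun B B' hB hB' hr => hrank_inj _ _ hB hB' hr)
        (by rw [Finset.card_range])
      have hrin : cj - (n - P.card) ∈ Finset.range ((P \ S).card) := by
        rw [Finset.mem_range, hcardPS]
        omega
      obtain ⟨B, hB, hr⟩ := hsurj _ hrin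
      have hr' : cj - (n - P.card) = rankIn P S B := hr
      refine ⟨⟨B, (Finset.mem_sdiff.1 hB).1⟩, Set.mem_univ _, ?_⟩
      rw [hval_not _ (Finset.mem_sdiff.1 hB).2]
      have : n - P.card + rankIn P S B = cj := by omega
      rw [h0', this]
    · -- lower rows
      have hpos' : 0 < ci := hpos
      obtain ⟨b, hb⟩ := blockIdx_surjective (hmax := hmax) (τ ⟨(ci - 1, cj), hcell⟩)
      obtain ⟨B, hBS⟩ := b
      refine ⟨⟨B, hS hBS⟩, Set.mem_univ _, ?_⟩
      rw [hval_mem ⟨B, hS hBS⟩ hBS]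
      have h2 : blockIdx S hmax ⟨B, hBS⟩ = τ ⟨(ci - 1, cj), hcell⟩ := hb
      rw [h2, Equiv.symm_apply_apply]
      show (ci - 1 + 1, cj) = (ci, cj)
      have : ci - 1 + 1 = ci := by omega
      rw [this]
  · -- row condition
    intro B B' heq hlt
    by_cases h : B.1 ∈ S <;> by_cases h' : B'.1 ∈ S
    · rw [hval_mem B h, hval_mem B' h'] at heq hlt
      have heq' : (τ.symm (blockIdx S hmax ⟨B.1, h⟩)).1.1 + 1 =
          (τ.symm (blockIdx S hmax ⟨B'.1, h'⟩)).1.1 + 1 := heq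
      have hlt' : (τ.symm (blockIdx S hmax ⟨B.1, h⟩)).1.2 <
          (τ.symm (blockIdx S hmax ⟨B'.1, h'⟩)).1.2 := hlt
      have h5 := (hτ (τ.symm (blockIdx S hmax ⟨B.1, h⟩)) (τ.symm (blockIdx S hmax ⟨B'.1, h'⟩))).1
        (by omega) hlt'
      rw [Equiv.apply_symm_apply, Equiv.apply_symm_apply] at h5
      exact (blockIdx_lt_iff (hmax := hmax) _ _).1 h5
    · rw [hval_mem B h, hval_not B' h'] at heq
      exact absurd (heq : _ + 1 = 0) (by omega)
    · rw [hval_not B h, hval_mem B' h'] at heq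
      exact absurd (heq : 0 = _ + 1) (by omega)
    · rw [hval_not B h, hval_not B' h'] at hlt
      have hlt' : n - P.card + rankIn P S B.1 < n - P.card + rankIn P S B'.1 := hlt
      exact hrank_mono _ _ (Finset.mem_sdiff.2 ⟨B.2, h⟩) (Finset.mem_sdiff.2 ⟨B'.2, h'⟩)
        (by omega)
  · -- column condition
    intro B B' heq hlt
    by_cases h : B.1 ∈ S <;> by_cases h' : B'.1 ∈ S
    · rw [hval_mem B h, hval_mem B' h'] at heq hlt
      have heq' : (τ.symm (blockIdx S hmax ⟨B.1, h⟩)).1.2 =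
          (τ.symm (blockIdx S hmax ⟨B'.1, h'⟩)).1.2 := heq
      have hlt' : (τ.symm (blockIdx S hmax ⟨B.1, h⟩)).1.1 + 1 <
          (τ.symm (blockIdx S hmax ⟨B'.1, h'⟩)).1.1 + 1 := hlt
      have h5 := (hτ (τ.symm (blockIdx S hmax ⟨B.1, h⟩)) (τ.symm (blockIdx S hmax ⟨B'.1, h'⟩))).2
        heq' (by omega)
      rw [Equiv.apply_symm_apply, Equiv.apply_symm_apply] at h5
      exact (blockIdx_lt_iff (hmax := hmax) _ _).1 h5
    · rw [hval_mem B h, hval_not B' h'] at hlt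
      exact absurd (hlt : _ + 1 < 0) (by omega)
    · exfalso
      rw [hval_not B h, hval_mem B' h'] at heq
      have hcol : (τ.symm (blockIdx S hmax ⟨B'.1, h'⟩)).1.2 < m :=
        col_lt_of_mem_shape (τ.symm (blockIdx S hmax ⟨B'.1, h'⟩)).2
      have heq' : n - P.card + rankIn P S B.1 =
          (τ.symm (blockIdx S hmax ⟨B'.1, h'⟩)).1.2 := heq
      omega
    · rw [hval_not B h, hval_not B' h'] at hlt
      exact absurd (hlt : (0 : ℕ) < 0) (by omega)

theorem fillOf_inj {k n m : ℕ} {mu : Nat.Partition m}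
    {P S S' : Finset (Finset (Fin k))}
    {τ τ' : {c : ℕ × ℕ // c ∈ shapeOf mu} ≃ Fin m}
    (hS : S ⊆ P) (hS' : S' ⊆ P)
    (hmax : (S.image blockMax).card = m) (hmax' : (S'.image blockMax).card = m)
    (heq : fillOf n P S τ hmax = fillOf n P S' τ' hmax') : S = S' ∧ τ = τ' := by
  have hSS : S = S' := by
    ext B
    constructor
    · intro hB
      by_contra hB'
      have h1 := congrFun heq ⟨B, hS hB⟩
      rw [fillOf, fillOf, dif_pos hB, dif_neg hB'] at h1
      exact absurd (congrArg Prod.fst h1 : _ + 1 = 0) (by omega)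
    · intro hB
      by_contra hB'
      have h1 := congrFun heq ⟨B, hS' hB⟩
      rw [fillOf, fillOf, dif_neg hB', dif_pos hB] at h1
      exact absurd (congrArg Prod.fst h1 : (0 : ℕ) = _ + 1) (by omega)
  subst hSS
  refine ⟨rfl, ?_⟩
  have hsymm : ∀ v : Fin m, τ.symm v = τ'.symm v := by
    intro v
    obtain ⟨b, hb⟩ := blockIdx_surjective (hmax := hmax) v
    have h1 := congrFun heq ⟨b.1, hS b.2⟩
    rw [fillOf, fillOf, dif_pos b.2, dif_pos b.2] at h1
    have hbi : (⟨(⟨b.1, hS b.2⟩ : {B // B ∈ P}).1, b.2⟩ : {B // B ∈ S}) = b :=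
      Subtype.ext rfl
    rw [hbi] at h1
    have hmm : blockIdx S hmax' b = blockIdx S hmax b := rfl
    rw [hmm, hb] at h1
    have h2 : (τ.symm v).1.1 + 1 = (τ'.symm v).1.1 + 1 := congrArg Prod.fst h1
    have h3 := congrArg Prod.snd h1
    exact Subtype.ext (Prod.ext (by omega) h3)
  refine Equiv.ext fun d => ?_
  have h4 : τ'.symm (τ d) = d := by rw [← hsymm, Equiv.symm_apply_apply]
  calc τ d = τ' (τ'.symm (τ d)) := (Equiv.apply_symm_apply _ _).symm
    _ = τ' d := by rw [h4]

theorem fillOf_surj {k n m : ℕ} {lam : Nat.Partition n} {mu : Nat.Partition m}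
    {P : Finset (Finset (Fin k))}
    (hstar : (lam.parts.sort (· ≥ ·)).tail = mu.parts.sort (· ≥ ·))
    (hm : m ≤ k) (hn : 2 * k ≤ n) (hP : IsSetPartition P)
    (T : {B : Finset (Fin k) // B ∈ P} → ℕ × ℕ)
    (hbij : Set.BijOn T Set.univ ↑(skewCells lam P.card))
    (hrow : ∀ B B' : {B : Finset (Fin k) // B ∈ P},
      (T B).1 = (T B').1 → (T B).2 < (T B').2 → blockMax B.1 < blockMax B'.1)
    (hcol : ∀ B B' : {B : Finset (Fin k) // B ∈ P},
      (T B).2 = (T B').2 → (T B).1 < (T B').1 → blockMax B.1 < blockMax B'.1) :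
    ∃ (S : Finset (Finset (Fin k))) (_ : S ⊆ P) (_ : S.card = m)
      (hmax : (S.image blockMax).card = m)
      (τ : {c : ℕ × ℕ // c ∈ shapeOf mu} ≃ Fin m),
      (∀ c d : {c : ℕ × ℕ // c ∈ shapeOf mu},
        (c.1.1 = d.1.1 → c.1.2 < d.1.2 → τ c < τ d) ∧
        (c.1.2 = d.1.2 → c.1.1 < d.1.1 → τ c < τ d)) ∧
      fillOf n P S τ hmax = T := by
  classical
  set S := P.filter (fun B => ∃ h : B ∈ P, (T ⟨B, h⟩).1 ≠ 0) with hSdef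
  have hSsub : S ⊆ P := Finset.filter_subset _ _
  have hmem : ∀ b : {B : Finset (Fin k) // B ∈ P}, b.1 ∈ S ↔ (T b).1 ≠ 0 := by
    intro b
    rw [hSdef, Finset.mem_filter]
    constructor
    · rintro ⟨-, h, hh⟩; exact hh
    · intro h; exact ⟨b.2, b.2, h⟩
  have hTmem : ∀ b, T b ∈ skewCells lam P.card := fun b =>
    Finset.mem_coe.1 (hbij.1 (Set.mem_univ b))
  have hTinj : ∀ b b', T b = T b' → b = b' := fun b b' h =>
    hbij.2.1 (Set.mem_univ _) (Set.mem_univ _) h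
  have hrow0 : ∀ b, (T b).1 = 0 → n - P.card ≤ (T b).2 ∧ (T b).2 < n - m := by
    intro b h0
    rcases (mem_skewCells lam mu hstar).1 (hTmem b) with ⟨-, h1, h2⟩ | ⟨hpos, -⟩
    · exact ⟨h1, h2⟩
    · omega
  have hcellOf : ∀ b, (T b).1 ≠ 0 → ((T b).1 - 1, (T b).2) ∈ shapeOf mu := by
    intro b h0
    rcases (mem_skewCells lam mu hstar).1 (hTmem b) with ⟨h1, -, -⟩ | ⟨-, h2⟩
    · exact absurd h1 h0
    · exact h2
  have hScard : S.card = m := by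
    rw [← card_cells_shapeOf (mu := mu)]
    refine Finset.card_bij
      (fun B hB => ((T ⟨B, hSsub hB⟩).1 - 1, (T ⟨B, hSsub hB⟩).2)) ?_ ?_ ?_
    · intro B hB
      rw [YoungDiagram.mem_cells]
      exact hcellOf _ ((hmem ⟨B, hSsub hB⟩).1 hB)
    · intro B hB B' hB' h
      have h1 : (T ⟨B, hSsub hB⟩).1 - 1 = (T ⟨B', hSsub hB'⟩).1 - 1 := congrArg Prod.fst h
      have h2 := congrArg Prod.snd h
      have hne : (T ⟨B, hSsub hB⟩).1 ≠ 0 := (hmem _).1 hB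
      have hne' : (T ⟨B', hSsub hB'⟩).1 ≠ 0 := (hmem _).1 hB'
      have h3 : T ⟨B, hSsub hB⟩ = T ⟨B', hSsub hB'⟩ := Prod.ext (by omega) h2
      exact congrArg (fun x : {B : Finset (Fin k) // B ∈ P} => x.1) (hTinj _ _ h3)
    · intro c hc
      rw [YoungDiagram.mem_cells] at hc
      have hcs : ((c.1 + 1, c.2) : ℕ × ℕ) ∈ skewCells lam P.card := by
        rw [mem_skewCells lam mu hstar]
        right
        exact ⟨Nat.succ_pos _, hc⟩
      obtain ⟨b, -, hb⟩ := hbij.2.2 (Finset.mem_coe.2 hcs)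
      have hbS : b.1 ∈ S := (hmem b).2 (by rw [hb]; exact Nat.succ_ne_zero _)
      refine ⟨b.1, hbS, ?_⟩
      show ((T b).1 - 1, (T b).2) = c
      rw [hb]
      rfl
  have hmax : (S.image blockMax).card = m := by
    rw [Finset.card_image_of_injOn, hScard]
    intro B hB B' hB' h
    exact blockMax_injOn hP _ (hSsub (Finset.mem_coe.1 hB)) _ (hSsub (Finset.mem_coe.1 hB')) h
  have hch : ∀ d : {c : ℕ × ℕ // c ∈ shapeOf mu},
      ∃ b : {B : Finset (Fin k) // B ∈ P}, T b = (d.1.1 + 1, d.1.2) := by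
    intro d
    have hcs : ((d.1.1 + 1, d.1.2) : ℕ × ℕ) ∈ skewCells lam P.card := by
      rw [mem_skewCells lam mu hstar]
      right
      exact ⟨Nat.succ_pos _, d.2⟩
    obtain ⟨b, -, hb⟩ := hbij.2.2 (Finset.mem_coe.2 hcs)
    exact ⟨b, hb⟩
  choose bf hbf using hch
  have hbfS : ∀ d, (bf d).1 ∈ S := fun d =>
    (hmem _).2 (by rw [hbf d]; exact Nat.succ_ne_zero _)
  have hinjS : ∀ B ∈ S, ∀ B' ∈ S, blockMax B = blockMax B' → B = B' :=
    fun B hB B' hB' h => blockMax_injOn hP _ (hSsub hB) _ (hSsub hB') h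
  have hρinj : Function.Injective
      (fun d : {c : ℕ × ℕ // c ∈ shapeOf mu} => blockIdx S hmax ⟨(bf d).1, hbfS d⟩) := by
    intro d d' h
    have h1 := blockIdx_injective (hmax := hmax) hinjS h
    have h2 : (bf d).1 = (bf d').1 := congrArg (fun x : {C : Finset (Fin k) // C ∈ S} => x.1) h1
    have h4 : T (bf d) = T (bf d') := congrArg T (Subtype.ext h2)
    rw [hbf d, hbf d'] at h4
    have h5 : d.1.1 + 1 = d'.1.1 + 1 := congrArg Prod.fst h4
    have h6 := congrArg Prod.snd h4
    exact Subtype.ext (Prod.ext (by omega) h6)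
  have hρsurj : Function.Surjective
      (fun d : {c : ℕ × ℕ // c ∈ shapeOf mu} => blockIdx S hmax ⟨(bf d).1, hbfS d⟩) := by
    intro v
    obtain ⟨b, hb⟩ := blockIdx_surjective (hmax := hmax) v
    have hne : (T ⟨b.1, hSsub b.2⟩).1 ≠ 0 := (hmem ⟨b.1, hSsub b.2⟩).1 b.2
    have hcell := hcellOf ⟨b.1, hSsub b.2⟩ hne
    refine ⟨⟨((T ⟨b.1, hSsub b.2⟩).1 - 1, (T ⟨b.1, hSsub b.2⟩).2), hcell⟩, ?_⟩
    set d : {c : ℕ × ℕ // c ∈ shapeOf mu} :=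
      ⟨((T ⟨b.1, hSsub b.2⟩).1 - 1, (T ⟨b.1, hSsub b.2⟩).2), hcell⟩ with hd
    have h4 : T (bf d) = T ⟨b.1, hSsub b.2⟩ := by
      rw [hbf d]
      show ((T ⟨b.1, hSsub b.2⟩).1 - 1 + 1, (T ⟨b.1, hSsub b.2⟩).2) = _
      have : (T ⟨b.1, hSsub b.2⟩).1 - 1 + 1 = (T ⟨b.1, hSsub b.2⟩).1 := by omega
      rw [this]
    have h5 : bf d = ⟨b.1, hSsub b.2⟩ := hTinj _ _ h4
    have h6 : (⟨(bf d).1, hbfS d⟩ : {C : Finset (Fin k) // C ∈ S}) = b := by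
      apply Subtype.ext
      show (bf d).1 = b.1
      rw [h5]
    show blockIdx S hmax ⟨(bf d).1, hbfS d⟩ = v
    rw [h6, hb]
  refine ⟨S, hSsub, hScard, hmax,
    Equiv.ofBijective _ ⟨hρinj, hρsurj⟩, ?_, ?_⟩
  · intro c d
    constructor
    · intro h1 h2
      show blockIdx S hmax ⟨(bf c).1, hbfS c⟩ < blockIdx S hmax ⟨(bf d).1, hbfS d⟩
      rw [blockIdx_lt_iff]
      refine hrow (bf c) (bf d) ?_ ?_
      · rw [hbf c, hbf d]
        show c.1.1 + 1 = d.1.1 + 1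
        omega
      · rw [hbf c, hbf d]
        exact h2
    · intro h1 h2
      show blockIdx S hmax ⟨(bf c).1, hbfS c⟩ < blockIdx S hmax ⟨(bf d).1, hbfS d⟩
      rw [blockIdx_lt_iff]
      refine hcol (bf c) (bf d) ?_ ?_
      · rw [hbf c, hbf d]
        exact h1
      · rw [hbf c, hbf d]
        show c.1.1 + 1 < d.1.1 + 1
        omega
  · funext B
    by_cases h : B.1 ∈ S
    · rw [fillOf, dif_pos h]
      set v := blockIdx S hmax ⟨B.1, h⟩ with hv
      set τ := Equiv.ofBijective _ ⟨hρinj, hρsurj⟩ with hτdef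
      have h1 : τ (τ.symm v) = v := Equiv.apply_symm_apply _ _
      have h2 : blockIdx S hmax ⟨(bf (τ.symm v)).1, hbfS _⟩ = blockIdx S hmax ⟨B.1, h⟩ := h1
      have h3 := blockIdx_injective (hmax := hmax) hinjS h2
      have h4 : bf (τ.symm v) = B :=
        Subtype.ext (congrArg (fun x : {C : Finset (Fin k) // C ∈ S} => x.1) h3)
      have h5 := hbf (τ.symm v)
      rw [h4] at h5
      exact h5.symm
    · rw [fillOf, dif_neg h]
      have h0 : (T B).1 = 0 := by
        by_contra hne
        exact h ((hmem B).2 hne)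
      obtain ⟨hge, hlt⟩ := hrow0 B h0
      have hrank : rankIn P S B.1 = (T B).2 - (n - P.card) := by
        rw [rankIn, ← Nat.card_Ico (n - P.card) ((T B).2)]
        refine Finset.card_bij (fun B' hB' =>
          (T ⟨B', (Finset.mem_sdiff.1 (Finset.mem_filter.1 hB').1).1⟩).2) ?_ ?_ ?_
        · intro B' hB'
          obtain ⟨hB'PS, hB'max⟩ := Finset.mem_filter.1 hB'
          obtain ⟨hB'P, hB'nS⟩ := Finset.mem_sdiff.1 hB'PS
          set b' : {B : Finset (Fin k) // B ∈ P} := ⟨B', hB'P⟩ with hb'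
          have h0' : (T b').1 = 0 := by
            by_contra hne
            exact hB'nS ((hmem b').2 hne)
          obtain ⟨hge', -⟩ := hrow0 b' h0'
          rw [Finset.mem_Ico]
          refine ⟨hge', ?_⟩
          rcases lt_trichotomy ((T b').2) ((T B).2) with hc' | hc' | hc'
          · exact hc'
          · exfalso
            have : T b' = T B := Prod.ext (by omega) hc'
            have hBB := hTinj _ _ this
            have : B' = B.1 := congrArg (fun x : {C : Finset (Fin k) // C ∈ P} => x.1) hBB
            rw [this] at hB'max
            exact absurd hB'max (lt_irrefl _)
          · exfalso
            have hbb : blockMax b'.1 = blockMax B' := rfl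
            have := hrow B b' (by omega) hc'
            omega
        · intro B1 hB1 B2 hB2 hval
          obtain ⟨hB1PS, -⟩ := Finset.mem_filter.1 hB1
          obtain ⟨hB1P, hB1nS⟩ := Finset.mem_sdiff.1 hB1PS
          obtain ⟨hB2PS, -⟩ := Finset.mem_filter.1 hB2
          obtain ⟨hB2P, hB2nS⟩ := Finset.mem_sdiff.1 hB2PS
          have h01 : (T ⟨B1, hB1P⟩).1 = 0 := by
            by_contra hne; exact hB1nS ((hmem ⟨B1, hB1P⟩).2 hne)
          have h02 : (T ⟨B2, hB2P⟩).1 = 0 := by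
            by_contra hne; exact hB2nS ((hmem ⟨B2, hB2P⟩).2 hne)
          have : T ⟨B1, hB1P⟩ = T ⟨B2, hB2P⟩ := Prod.ext (by omega) hval
          exact congrArg (fun x : {C : Finset (Fin k) // C ∈ P} => x.1) (hTinj _ _ this)
        · intro x hx
          rw [Finset.mem_Ico] at hx
          have hxs : ((0, x) : ℕ × ℕ) ∈ skewCells lam P.card := by
            rw [mem_skewCells lam mu hstar]
            left
            exact ⟨rfl, hx.1, by omega⟩
          obtain ⟨b', -, hb'⟩ := hbij.2.2 (Finset.mem_coe.2 hxs)
          have h0' : (T b').1 = 0 := by rw [hb']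
          have hb'nS : b'.1 ∉ S := by
            intro hc'
            exact absurd h0' ((hmem b').1 hc')
          have hb'max : blockMax b'.1 < blockMax B.1 := by
            refine hrow b' B (by omega) ?_
            have : (T b').2 = x := by rw [hb']
            omega
          refine ⟨b'.1, Finset.mem_filter.2 ⟨Finset.mem_sdiff.2 ⟨b'.2, hb'nS⟩, hb'max⟩, ?_⟩
          show (T b').2 = x
          rw [hb']
      apply Prod.ext
      · exact h0.symm
      · show n - P.card + rankIn P S B.1 = (T B).2
        omega

theorem card_fill {k n m : ℕ} (lam : Nat.Partition n) (mu : Nat.Partition m)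
    (hstar : (lam.parts.sort (· ≥ ·)).tail = mu.parts.sort (· ≥ ·))
    (hm : m ≤ k) (hn : 2 * k ≤ n)
    (P : Finset (Finset (Fin k))) (hP : IsSetPartition P) :
    Nat.card {T : {B : Finset (Fin k) // B ∈ P} → ℕ × ℕ //
      Set.BijOn T Set.univ ↑(skewCells lam P.card) ∧
      (∀ B B' : {B : Finset (Fin k) // B ∈ P},
        (T B).1 = (T B').1 → (T B).2 < (T B').2 → blockMax B.1 < blockMax B'.1) ∧
      (∀ B B' : {B : Finset (Fin k) // B ∈ P},
        (T B).2 = (T B').2 → (T B).1 < (T B').1 → blockMax B.1 < blockMax B'.1)} =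
    (P.card).choose m * fSYT m mu := by
  classical
  have hmaxf : ∀ S : Finset (Finset (Fin k)), S ⊆ P → S.card = m →
      (S.image blockMax).card = m := by
    intro S hS hc
    rw [Finset.card_image_of_injOn, hc]
    intro B hB B' hB' h
    exact blockMax_injOn hP _ (hS (Finset.mem_coe.1 hB)) _ (hS (Finset.mem_coe.1 hB')) h
  have key : Nat.card ({S : Finset (Finset (Fin k)) // S ∈ P.powersetCard m} ×
      {τ : {c : ℕ × ℕ // c ∈ shapeOf mu} ≃ Fin m //
        ∀ c d : {c : ℕ × ℕ // c ∈ shapeOf mu},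
          (c.1.1 = d.1.1 → c.1.2 < d.1.2 → τ c < τ d) ∧
          (c.1.2 = d.1.2 → c.1.1 < d.1.1 → τ c < τ d)}) =
      Nat.card {T : {B : Finset (Fin k) // B ∈ P} → ℕ × ℕ //
      Set.BijOn T Set.univ ↑(skewCells lam P.card) ∧
      (∀ B B' : {B : Finset (Fin k) // B ∈ P},
        (T B).1 = (T B').1 → (T B).2 < (T B').2 → blockMax B.1 < blockMax B'.1) ∧
      (∀ B B' : {B : Finset (Fin k) // B ∈ P},
        (T B).2 = (T B').2 → (T B).1 < (T B').1 → blockMax B.1 < blockMax B'.1)} := by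
    apply Nat.card_eq_of_bijective (fun x =>
      ⟨fillOf n P x.1.1 x.2.1
          (hmaxf x.1.1 (Finset.mem_powersetCard.1 x.1.2).1
            (Finset.mem_powersetCard.1 x.1.2).2),
        fillOf_cond hstar hm hn hP (Finset.mem_powersetCard.1 x.1.2).1
          (Finset.mem_powersetCard.1 x.1.2).2
          (hmaxf x.1.1 (Finset.mem_powersetCard.1 x.1.2).1
            (Finset.mem_powersetCard.1 x.1.2).2) x.2.2⟩)
    constructor
    · intro x y h
      have hval := congrArg Subtype.val h
      obtain ⟨hSS, hττ⟩ := fillOf_inj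
        (Finset.mem_powersetCard.1 x.1.2).1 (Finset.mem_powersetCard.1 y.1.2).1
        (hmaxf x.1.1 (Finset.mem_powersetCard.1 x.1.2).1 (Finset.mem_powersetCard.1 x.1.2).2)
        (hmaxf y.1.1 (Finset.mem_powersetCard.1 y.1.2).1 (Finset.mem_powersetCard.1 y.1.2).2)
        hval
      exact Prod.ext (Subtype.ext hSS) (Subtype.ext hττ)
    · rintro ⟨T, hT1, hT2, hT3⟩
      obtain ⟨S, hSs, hSc, hmax2, τ, hτstd, hfill⟩ :=
        fillOf_surj hstar hm hn hP T hT1 hT2 hT3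
      refine ⟨(⟨S, Finset.mem_powersetCard.2 ⟨hSs, hSc⟩⟩, ⟨τ, hτstd⟩), ?_⟩
      exact Subtype.ext hfill
  rw [← key, Nat.card_prod]
  congr 1
  rw [Nat.card_eq_fintype_card, Fintype.card_coe, Finset.card_powersetCard]

/-! ## Counting set partitions -/

def upb {k : ℕ} (C : Finset (Fin k)) : Finset (Fin (k + 1)) := C.image Fin.castSucc

noncomputable def downb {k : ℕ} (B : Finset (Fin (k + 1))) : Finset (Fin k) :=
  B.preimage Fin.castSucc (Fin.castSucc_injective k).injOn

lemma mem_upb {k : ℕ} {C : Finset (Fin k)} {x : Fin (k + 1)} :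
    x ∈ upb C ↔ ∃ y ∈ C, Fin.castSucc y = x := Finset.mem_image

lemma mem_downb {k : ℕ} {B : Finset (Fin (k + 1))} {y : Fin k} :
    y ∈ downb B ↔ Fin.castSucc y ∈ B := Finset.mem_preimage

lemma last_not_mem_upb {k : ℕ} (C : Finset (Fin k)) : Fin.last k ∉ upb C := by
  rw [mem_upb]
  rintro ⟨y, -, hy⟩
  exact absurd hy (ne_of_lt (Fin.castSucc_lt_last y))

lemma downb_upb {k : ℕ} (C : Finset (Fin k)) : downb (upb C) = C := by
  ext y
  rw [mem_downb, mem_upb]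
  constructor
  · rintro ⟨z, hz, hzy⟩
    rwa [← Fin.castSucc_injective k hzy]
  · intro hy
    exact ⟨y, hy, rfl⟩

lemma upb_downb {k : ℕ} {B : Finset (Fin (k + 1))} (h : Fin.last k ∉ B) :
    upb (downb B) = B := by
  ext x
  rw [mem_upb]
  constructor
  · rintro ⟨y, hy, rfl⟩
    exact mem_downb.1 hy
  · intro hx
    have hxl : x ≠ Fin.last k := fun hh => h (hh ▸ hx)
    refine ⟨x.castPred hxl, ?_, Fin.castSucc_castPred x hxl⟩
    rw [mem_downb, Fin.castSucc_castPred]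
    exact hx

lemma upb_inj {k : ℕ} : Function.Injective (upb (k := k)) := by
  intro C C' h
  rw [← downb_upb C, h, downb_upb]

lemma upb_nonempty {k : ℕ} {C : Finset (Fin k)} (h : C.Nonempty) : (upb C).Nonempty :=
  h.image _

lemma downb_nonempty {k : ℕ} {B : Finset (Fin (k + 1))} (hB : B.Nonempty)
    (h : B ≠ {Fin.last k}) : (downb B).Nonempty := by
  have : ∃ x ∈ B, x ≠ Fin.last k := by
    by_contra hc
    push_neg at hc
    apply h
    apply Finset.Subset.antisymm
    · intro x hx
      rw [Finset.mem_singleton]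
      exact hc x hx
    · obtain ⟨x, hx⟩ := hB
      intro z hz
      rw [Finset.mem_singleton] at hz
      rwa [hz, ← hc x hx]
  obtain ⟨x, hx, hxl⟩ := this
  exact ⟨x.castPred hxl, mem_downb.2 (by rwa [Fin.castSucc_castPred])⟩

def rank0 {k : ℕ} (Q : Finset (Finset (Fin k))) (B : Finset (Fin k)) : ℕ :=
  (Q.filter (fun C => blockMax C < blockMax B)).card

lemma rank0_lt {k : ℕ} {Q : Finset (Finset (Fin k))} {B : Finset (Fin k)} (hB : B ∈ Q) :
    rank0 Q B < Q.card := by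
  apply Finset.card_lt_card
  rw [Finset.ssubset_iff_of_subset (Finset.filter_subset _ _)]
  exact ⟨B, hB, by simp⟩

lemma rank0_strictMono {k : ℕ} {Q : Finset (Finset (Fin k))} {B B' : Finset (Fin k)}
    (hB : B ∈ Q) (hlt : blockMax B < blockMax B') : rank0 Q B < rank0 Q B' := by
  apply Finset.card_lt_card
  constructor
  · intro C hC
    rw [Finset.mem_filter] at hC ⊢
    exact ⟨hC.1, hC.2.trans hlt⟩
  · intro hsub
    have := hsub (Finset.mem_filter.2 ⟨hB, hlt⟩)
    rw [Finset.mem_filter] at this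
    exact absurd this.2 (lt_irrefl _)

lemma rank0_inj {k : ℕ} {Q : Finset (Finset (Fin k))}
    (hinj : ∀ B ∈ Q, ∀ B' ∈ Q, blockMax B = blockMax B' → B = B')
    {B B' : Finset (Fin k)} (hB : B ∈ Q) (hB' : B' ∈ Q)
    (h : rank0 Q B = rank0 Q B') : B = B' := by
  rcases lt_trichotomy (blockMax B) (blockMax B') with hlt | hlt | hlt
  · exact absurd (rank0_strictMono hB hlt) (by omega)
  · exact hinj _ hB _ hB' hlt
  · exact absurd (rank0_strictMono hB' hlt) (by omega)

lemma rank0_surj {k : ℕ} {Q : Finset (Finset (Fin k))}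
    (hinj : ∀ B ∈ Q, ∀ B' ∈ Q, blockMax B = blockMax B' → B = B')
    {r : ℕ} (hr : r < Q.card) : ∃ B ∈ Q, rank0 Q B = r := by
  have hsurj := Finset.surj_on_of_inj_on_of_card_le
    (s := Q) (t := Finset.range Q.card)
    (fun B _ => rank0 Q B)
    (fun B hB => Finset.mem_range.2 (rank0_lt hB))
    (fun B B' hB hB' h => rank0_inj hinj hB hB' h)
    (by rw [Finset.card_range])
  obtain ⟨B, hB, hBr⟩ := hsurj r (Finset.mem_range.2 hr)
  exact ⟨B, hB, hBr.symm⟩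

lemma block_unique {k : ℕ} {P : Finset (Finset (Fin k))} (hP : IsSetPartition P)
    {B B' : Finset (Fin k)} {x : Fin k} (hB : B ∈ P) (hB' : B' ∈ P)
    (hx : x ∈ B) (hx' : x ∈ B') : B = B' := by
  obtain ⟨U, -, hU⟩ := hP.2 x
  rw [hU B ⟨hB, hx⟩, hU B' ⟨hB', hx'⟩]

section PartStep

variable {k : ℕ}

/-- Case: the singleton `{last}` is a block. -/
lemma downPart_singleton {P : Finset (Finset (Fin (k + 1)))} (hP : IsSetPartition P)
    (hl : {Fin.last k} ∈ P) :
    IsSetPartition ((P.erase {Fin.last k}).image downb) ∧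
      ((P.erase {Fin.last k}).image downb).card = P.card - 1 ∧
      insert {Fin.last k} (((P.erase {Fin.last k}).image downb).image upb) = P := by
  have hnotlast : ∀ B ∈ P.erase {Fin.last k}, Fin.last k ∉ B := by
    intro B hB hx
    exact Finset.ne_of_mem_erase hB
      (block_unique hP (Finset.mem_of_mem_erase hB) hl hx (Finset.mem_singleton_self _))
  have hup : ∀ B ∈ P.erase {Fin.last k}, upb (downb B) = B :=
    fun B hB => upb_downb (hnotlast B hB)
  have hinj : ∀ B ∈ P.erase {Fin.last k}, ∀ B' ∈ P.erase {Fin.last k},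
      downb B = downb B' → B = B' := by
    intro B hB B' hB' h
    rw [← hup B hB, h, hup B' hB']
  refine ⟨⟨?_, ?_⟩, ?_, ?_⟩
  · intro C hC
    obtain ⟨B, hB, rfl⟩ := Finset.mem_image.1 hC
    exact downb_nonempty (hP.1 B (Finset.mem_of_mem_erase hB))
      (fun hh => Finset.ne_of_mem_erase hB hh)
  · intro y
    obtain ⟨B, ⟨hB, hyB⟩, hBu⟩ := hP.2 (Fin.castSucc y)
    have hBne : B ≠ {Fin.last k} := by
      intro hh
      rw [hh, Finset.mem_singleton] at hyB
      exact absurd hyB (ne_of_lt (Fin.castSucc_lt_last y))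
    have hBe : B ∈ P.erase {Fin.last k} := Finset.mem_erase.2 ⟨hBne, hB⟩
    refine ⟨downb B, ⟨Finset.mem_image_of_mem _ hBe, mem_downb.2 hyB⟩, ?_⟩
    rintro C ⟨hC, hyC⟩
    obtain ⟨B', hB', rfl⟩ := Finset.mem_image.1 hC
    have : B' = B := hBu B' ⟨Finset.mem_of_mem_erase hB', mem_downb.1 hyC⟩
    rw [this]
  · rw [Finset.card_image_of_injOn (fun B hB B' hB' h => hinj B hB B' hB' h),
      Finset.card_erase_of_mem hl]
  · -- reconstruction
    have himg : ((P.erase {Fin.last k}).image downb).image upb = P.erase {Fin.last k} := by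
      rw [Finset.image_image]
      apply Finset.image_congr (g := id) ?_ |>.trans (Finset.image_id)
      intro B hB
      exact hup B hB
    rw [himg, Finset.insert_erase hl]

/-- Case: `last` lies in a bigger block. -/
lemma downPart_gen {P : Finset (Finset (Fin (k + 1)))} (hP : IsSetPartition P)
    (hl : {Fin.last k} ∉ P) :
    IsSetPartition (P.image downb) ∧ (P.image downb).card = P.card := by
  have hne : ∀ B ∈ P, (downb B).Nonempty := by
    intro B hB
    exact downb_nonempty (hP.1 B hB) (fun hh => hl (hh ▸ hB))
  have hinj : ∀ B ∈ P, ∀ B' ∈ P, downb B = downb B' → B = B' := by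
    intro B hB B' hB' h
    obtain ⟨y, hy⟩ := hne B hB
    have hy' : y ∈ downb B' := h ▸ hy
    exact block_unique hP hB hB' (mem_downb.1 hy) (mem_downb.1 hy')
  refine ⟨⟨?_, ?_⟩, ?_⟩
  · intro C hC
    obtain ⟨B, hB, rfl⟩ := Finset.mem_image.1 hC
    exact hne B hB
  · intro y
    obtain ⟨B, ⟨hB, hyB⟩, hBu⟩ := hP.2 (Fin.castSucc y)
    refine ⟨downb B, ⟨Finset.mem_image_of_mem _ hB, mem_downb.2 hyB⟩, ?_⟩
    rintro C ⟨hC, hyC⟩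
    obtain ⟨B', hB', rfl⟩ := Finset.mem_image.1 hC
    have : B' = B := hBu B' ⟨hB', mem_downb.1 hyC⟩
    rw [this]
  · exact Finset.card_image_of_injOn (fun B hB B' hB' h => hinj B hB B' hB' h)

/-- Inserting the singleton `{last}` into a lifted partition. -/
lemma upPart_singleton {Q : Finset (Finset (Fin k))} (hQ : IsSetPartition Q) :
    IsSetPartition (insert {Fin.last k} (Q.image upb)) ∧
      (insert {Fin.last k} (Q.image upb)).card = Q.card + 1 ∧
      {Fin.last k} ∈ insert {Fin.last k} (Q.image upb) ∧
      ((insert {Fin.last k} (Q.image upb)).erase {Fin.last k}).image downb = Q := by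
  have hsing : {Fin.last k} ∉ Q.image upb := by
    intro hc
    obtain ⟨C, hC, hCe⟩ := Finset.mem_image.1 hc
    exact last_not_mem_upb C (hCe ▸ Finset.mem_singleton_self _)
  refine ⟨⟨?_, ?_⟩, ?_, Finset.mem_insert_self _ _, ?_⟩
  · intro B hB
    rcases Finset.mem_insert.1 hB with rfl | hB
    · exact ⟨_, Finset.mem_singleton_self _⟩
    · obtain ⟨C, hC, rfl⟩ := Finset.mem_image.1 hB
      exact upb_nonempty (hQ.1 C hC)
  · intro x
    by_cases hx : x = Fin.last k
    · subst hx
      refine ⟨{Fin.last k}, ⟨Finset.mem_insert_self _ _, Finset.mem_singleton_self _⟩, ?_⟩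
      rintro B ⟨hB, hxB⟩
      rcases Finset.mem_insert.1 hB with rfl | hB
      · rfl
      · obtain ⟨C, -, rfl⟩ := Finset.mem_image.1 hB
        exact absurd hxB (last_not_mem_upb C)
    · obtain ⟨C, ⟨hC, hyC⟩, hCu⟩ := hQ.2 (x.castPred hx)
      refine ⟨upb C, ⟨Finset.mem_insert_of_mem (Finset.mem_image_of_mem _ hC),
        mem_upb.2 ⟨x.castPred hx, hyC, Fin.castSucc_castPred x hx⟩⟩, ?_⟩
      rintro B ⟨hB, hxB⟩
      rcases Finset.mem_insert.1 hB with rfl | hB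
      · rw [Finset.mem_singleton] at hxB
        exact absurd hxB hx
      · obtain ⟨C', hC', rfl⟩ := Finset.mem_image.1 hB
        obtain ⟨y, hy, hyx⟩ := mem_upb.1 hxB
        have hyeq : y = x.castPred hx := by
          apply Fin.castSucc_injective k
          rw [hyx, Fin.castSucc_castPred]
        rw [hyeq] at hy
        rw [hCu C' ⟨hC', hy⟩]
  · rw [Finset.card_insert_of_notMem hsing,
      Finset.card_image_of_injective _ upb_inj]
  · rw [Finset.erase_insert hsing, Finset.image_image]
    refine (Finset.image_congr (g := id) ?_).trans Finset.image_id
    intro C hC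
    exact downb_upb C

lemma downb_injOn {P : Finset (Finset (Fin (k + 1)))} (hP : IsSetPartition P)
    (hl : {Fin.last k} ∉ P) :
    ∀ B ∈ P, ∀ B' ∈ P, downb B = downb B' → B = B' := by
  intro B hB B' hB' h
  obtain ⟨y, hy⟩ := downb_nonempty (hP.1 B hB) (fun hh => hl (hh ▸ hB))
  have hy' : y ∈ downb B' := h ▸ hy
  exact block_unique hP hB hB' (mem_downb.1 hy) (mem_downb.1 hy')

lemma downb_insert_last {B : Finset (Fin k)} :
    downb (insert (Fin.last k) (upb B)) = B := by
  ext y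
  rw [mem_downb, Finset.mem_insert]
  constructor
  · rintro (h | h)
    · exact absurd h (ne_of_lt (Fin.castSucc_lt_last y))
    · obtain ⟨z, hz, hzy⟩ := mem_upb.1 h
      rwa [← Fin.castSucc_injective k hzy]
  · intro hy
    exact Or.inr (mem_upb.2 ⟨y, hy, rfl⟩)

lemma upPart_gen {Q : Finset (Finset (Fin k))} (hQ : IsSetPartition Q)
    {B : Finset (Fin k)} (hB : B ∈ Q) :
    IsSetPartition (insert (insert (Fin.last k) (upb B)) ((Q.erase B).image upb)) ∧
      (insert (insert (Fin.last k) (upb B)) ((Q.erase B).image upb)).card = Q.card ∧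
      {Fin.last k} ∉ insert (insert (Fin.last k) (upb B)) ((Q.erase B).image upb) ∧
      (insert (insert (Fin.last k) (upb B)) ((Q.erase B).image upb)).image downb = Q := by
  obtain ⟨yB, hyB⟩ := hQ.1 B hB
  have hB0new : insert (Fin.last k) (upb B) ∉ (Q.erase B).image upb := by
    intro hc
    obtain ⟨C, -, hCe⟩ := Finset.mem_image.1 hc
    exact last_not_mem_upb C (hCe ▸ Finset.mem_insert_self _ _)
  have hlastnot : ∀ C ∈ Q.erase B, Fin.last k ∉ upb C := fun C _ => last_not_mem_upb C
  refine ⟨⟨?_, ?_⟩, ?_, ?_, ?_⟩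
  · intro C hC
    rcases Finset.mem_insert.1 hC with rfl | hC
    · exact ⟨Fin.last k, Finset.mem_insert_self _ _⟩
    · obtain ⟨D, hD, rfl⟩ := Finset.mem_image.1 hC
      exact upb_nonempty (hQ.1 D (Finset.mem_of_mem_erase hD))
  · intro x
    by_cases hx : x = Fin.last k
    · subst hx
      refine ⟨insert (Fin.last k) (upb B),
        ⟨Finset.mem_insert_self _ _, Finset.mem_insert_self _ _⟩, ?_⟩
      rintro C ⟨hC, hxC⟩
      rcases Finset.mem_insert.1 hC with rfl | hC
      · rfl
      · obtain ⟨D, hD, rfl⟩ := Finset.mem_image.1 hC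
        exact absurd hxC (last_not_mem_upb D)
    · set y := x.castPred hx with hy
      have hxy : Fin.castSucc y = x := Fin.castSucc_castPred x hx
      obtain ⟨C, ⟨hC, hyC⟩, hCu⟩ := hQ.2 y
      by_cases hCB : C = B
      · subst hCB
        refine ⟨insert (Fin.last k) (upb C),
          ⟨Finset.mem_insert_self _ _,
            Finset.mem_insert_of_mem (mem_upb.2 ⟨y, hyC, hxy⟩)⟩, ?_⟩
        rintro D ⟨hD, hxD⟩
        rcases Finset.mem_insert.1 hD with rfl | hD
        · rfl
        · obtain ⟨E, hE, rfl⟩ := Finset.mem_image.1 hD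
          obtain ⟨z, hz, hzx⟩ := mem_upb.1 hxD
          have : z = y := Fin.castSucc_injective k (by rw [hzx, hxy])
          rw [this] at hz
          have : E = C := hCu E ⟨Finset.mem_of_mem_erase hE, hz⟩
          exact absurd this (Finset.ne_of_mem_erase hE)
      · refine ⟨upb C,
          ⟨Finset.mem_insert_of_mem
            (Finset.mem_image_of_mem _ (Finset.mem_erase.2 ⟨hCB, hC⟩)),
            mem_upb.2 ⟨y, hyC, hxy⟩⟩, ?_⟩
        rintro D ⟨hD, hxD⟩
        rcases Finset.mem_insert.1 hD with rfl | hD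
        · exfalso
          rcases Finset.mem_insert.1 hxD with h | h
          · exact hx h
          · obtain ⟨z, hz, hzx⟩ := mem_upb.1 h
            have : z = y := Fin.castSucc_injective k (by rw [hzx, hxy])
            rw [this] at hz
            exact hCB ((hCu B ⟨hB, hz⟩).symm ▸ rfl)
        · obtain ⟨E, hE, rfl⟩ := Finset.mem_image.1 hD
          obtain ⟨z, hz, hzx⟩ := mem_upb.1 hxD
          have : z = y := Fin.castSucc_injective k (by rw [hzx, hxy])
          rw [this] at hz
          rw [hCu E ⟨Finset.mem_of_mem_erase hE, hz⟩]
  · rw [Finset.card_insert_of_notMem hB0new,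
      Finset.card_image_of_injective _ upb_inj, Finset.card_erase_of_mem hB]
    have : 0 < Q.card := Finset.card_pos.2 ⟨B, hB⟩
    omega
  · intro hc
    rcases Finset.mem_insert.1 hc with h | h
    · have : Fin.castSucc yB ∈ ({Fin.last k} : Finset (Fin (k + 1))) := by
        rw [h]
        exact Finset.mem_insert_of_mem (mem_upb.2 ⟨yB, hyB, rfl⟩)
      rw [Finset.mem_singleton] at this
      exact absurd this (ne_of_lt (Fin.castSucc_lt_last yB))
    · obtain ⟨C, -, hCe⟩ := Finset.mem_image.1 h
      exact last_not_mem_upb C (hCe ▸ Finset.mem_singleton_self _)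
  · rw [Finset.image_insert, downb_insert_last, Finset.image_image]
    have : ((Q.erase B).image (downb ∘ upb)) = Q.erase B := by
      refine (Finset.image_congr (g := id) ?_).trans Finset.image_id
      intro C _
      exact downb_upb C
    rw [this, Finset.insert_erase hB]

lemma recoverA1 {P : Finset (Finset (Fin (k + 1)))} (hP : IsSetPartition P)
    (hl : {Fin.last k} ∉ P) {B₀ : Finset (Fin (k + 1))} (hB₀ : B₀ ∈ P)
    (hlst : Fin.last k ∈ B₀) :
    P = insert (insert (Fin.last k) (upb (downb B₀)))
      (((P.image downb).erase (downb B₀)).image upb) := by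
  have h1 : insert (Fin.last k) (upb (downb B₀)) = B₀ := by
    ext x
    rw [Finset.mem_insert]
    constructor
    · rintro (rfl | h)
      · exact hlst
      · obtain ⟨y, hy, rfl⟩ := mem_upb.1 h
        exact mem_downb.1 hy
    · intro hx
      by_cases hxl : x = Fin.last k
      · exact Or.inl hxl
      · refine Or.inr (mem_upb.2 ⟨x.castPred hxl, ?_, Fin.castSucc_castPred x hxl⟩)
        rw [mem_downb, Fin.castSucc_castPred]
        exact hx
  rw [h1]
  ext C
  rw [Finset.mem_insert]
  constructor
  · intro hC
    by_cases hCB : C = B₀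
    · exact Or.inl hCB
    · have hlC : Fin.last k ∉ C := by
        intro hc
        exact hCB (block_unique hP hC hB₀ hc hlst)
      refine Or.inr (Finset.mem_image.2 ⟨downb C, Finset.mem_erase.2 ⟨?_, Finset.mem_image_of_mem _ hC⟩, upb_downb hlC⟩)
      intro hc
      exact hCB (downb_injOn hP hl C hC B₀ hB₀ hc)
  · rintro (rfl | h)
    · exact hB₀
    · obtain ⟨D, hD, rfl⟩ := Finset.mem_image.1 h
      obtain ⟨hDne, hDm⟩ := Finset.mem_erase.1 hD
      obtain ⟨C', hC', rfl⟩ := Finset.mem_image.1 hDm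
      have hC'B : C' ≠ B₀ := fun hc => hDne (hc ▸ rfl)
      have hlC' : Fin.last k ∉ C' := by
        intro hc
        exact hC'B (block_unique hP hC' hB₀ hc hlst)
      rw [upb_downb hlC']
      exact hC'

end PartStep

theorem card_parts (k t : ℕ) :
    Nat.card {P : Finset (Finset (Fin k)) // IsSetPartition P ∧ P.card = t} =
      stirling2 k t := by
  classical
  have conv : ∀ (κ τ : ℕ),
      Nat.card {P : Finset (Finset (Fin κ)) // IsSetPartition P ∧ P.card = τ} =
      (Finset.univ.filter
        (fun P : Finset (Finset (Fin κ)) => IsSetPartition P ∧ P.card = τ)).card := by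
    intro κ τ
    rw [Nat.card_eq_fintype_card]
    exact Fintype.card_subtype _
  rw [conv]
  clear conv
  induction k generalizing t with
  | zero =>
    cases t with
    | zero =>
      rw [show (Finset.univ.filter
          (fun P : Finset (Finset (Fin 0)) => IsSetPartition P ∧ P.card = 0)) = {∅} from ?_]
      · rfl
      ext P
      simp only [Finset.mem_filter, Finset.mem_univ, true_and, Finset.mem_singleton]
      constructor
      · rintro ⟨-, hc⟩
        exact Finset.card_eq_zero.1 hc
      · rintro rfl
        exact ⟨⟨fun B hB => absurd hB (Finset.notMem_empty B), fun x => x.elim0⟩, rfl⟩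
    | succ t =>
      rw [show (Finset.univ.filter
          (fun P : Finset (Finset (Fin 0)) => IsSetPartition P ∧ P.card = t + 1)) = ∅ from ?_]
      · rfl
      rw [Finset.eq_empty_iff_forall_notMem]
      intro P hP
      obtain ⟨-, hPart, hc⟩ := Finset.mem_filter.1 hP
      have : P.Nonempty := Finset.card_pos.1 (by omega)
      obtain ⟨B, hB⟩ := this
      obtain ⟨x, -⟩ := hPart.1 B hB
      exact x.elim0
  | succ k ih =>
    cases t with
    | zero =>
      rw [show (Finset.univ.filter
          (fun P : Finset (Finset (Fin (k + 1))) => IsSetPartition P ∧ P.card = 0)) = ∅ from ?_]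
      · rfl
      rw [Finset.eq_empty_iff_forall_notMem]
      intro P hP
      obtain ⟨-, hPart, hc⟩ := Finset.mem_filter.1 hP
      obtain ⟨B, ⟨hB, -⟩, -⟩ := hPart.2 (Fin.last k)
      rw [Finset.card_eq_zero.1 hc] at hB
      exact absurd hB (Finset.notMem_empty B)
    | succ t =>
      set big := Finset.univ.filter
        (fun P : Finset (Finset (Fin (k + 1))) => IsSetPartition P ∧ P.card = t + 1) with hbig
      have hmem : ∀ {P}, P ∈ big ↔ IsSetPartition P ∧ P.card = t + 1 := by
        intro P
        rw [hbig, Finset.mem_filter]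
        simp
      have hsplit := Finset.card_filter_add_card_filter_not
        (s := big) (p := fun P => {Fin.last k} ∈ P)
      -- A2: singleton block case
      have hA2 : ((big.filter (fun P => {Fin.last k} ∈ P)).card =
          (Finset.univ.filter
            (fun Q : Finset (Finset (Fin k)) => IsSetPartition Q ∧ Q.card = t)).card) := by
        refine Finset.card_bij (fun P _ => (P.erase {Fin.last k}).image downb) ?_ ?_ ?_
        · intro P hP
          obtain ⟨hPb, hl⟩ := Finset.mem_filter.1 hP
          obtain ⟨hPart, hc⟩ := hmem.1 hPb
          obtain ⟨h1, h2, -⟩ := downPart_singleton hPart hl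
          refine Finset.mem_filter.2 ⟨Finset.mem_univ _, h1, ?_⟩
          show ((P.erase {Fin.last k}).image downb).card = t
          omega
        · intro P hP P' hP' h
          obtain ⟨hPb, hl⟩ := Finset.mem_filter.1 hP
          obtain ⟨hPart, -⟩ := hmem.1 hPb
          obtain ⟨hPb', hl'⟩ := Finset.mem_filter.1 hP'
          obtain ⟨hPart', -⟩ := hmem.1 hPb'
          obtain ⟨-, -, hrec⟩ := downPart_singleton hPart hl
          obtain ⟨-, -, hrec'⟩ := downPart_singleton hPart' hl'
          have h' : (P.erase {Fin.last k}).image downb =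
              (P'.erase {Fin.last k}).image downb := h
          rw [← hrec, ← hrec', h']
        · intro Q hQ
          obtain ⟨-, hQpart, hQc⟩ := Finset.mem_filter.1 hQ
          obtain ⟨h1, h2, h3, h4⟩ := upPart_singleton hQpart
          refine ⟨insert {Fin.last k} (Q.image upb), ?_, h4⟩
          rw [Finset.mem_filter]
          exact ⟨hmem.2 ⟨h1, by omega⟩, h3⟩
      -- A1: general case
      have hA1 : ((big.filter (fun P => ¬ {Fin.last k} ∈ P)).card =
          ((Finset.univ.filter
            (fun Q : Finset (Finset (Fin k)) => IsSetPartition Q ∧ Q.card = t + 1)) ×ˢ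
            Finset.range (t + 1)).card) := by
        refine Finset.card_bij (fun P hP => (P.image downb,
          rank0 (P.image downb) (downb (P.choose (fun B => Fin.last k ∈ B)
            ((Finset.mem_filter.1 ((Finset.mem_filter.1 hP).1)).2.1.2 (Fin.last k)))))) ?_ ?_ ?_
        · intro P hP
          obtain ⟨hPb, hl⟩ := Finset.mem_filter.1 hP
          obtain ⟨hPart, hc⟩ := hmem.1 hPb
          obtain ⟨h1, h2⟩ := downPart_gen hPart hl
          have hch := Finset.choose_spec (fun B => Fin.last k ∈ B) P
            ((Finset.mem_filter.1 ((Finset.mem_filter.1 hP).1)).2.1.2 (Fin.last k))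
          refine Finset.mem_product.2 ⟨Finset.mem_filter.2 ⟨Finset.mem_univ _, h1, ?_⟩,
            Finset.mem_range.2 ?_⟩
          · show (P.image downb).card = t + 1
            omega
          · show rank0 (P.image downb) (downb (P.choose (fun B => Fin.last k ∈ B)
              ((Finset.mem_filter.1 ((Finset.mem_filter.1 hP).1)).2.1.2 (Fin.last k)))) < t + 1
            have : rank0 (P.image downb) (downb (P.choose _ _)) < (P.image downb).card :=
              rank0_lt (Finset.mem_image_of_mem _ hch.1)
            omega
        · intro P hP P' hP' h
          obtain ⟨hPb, hl⟩ := Finset.mem_filter.1 hP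
          obtain ⟨hPart, hc⟩ := hmem.1 hPb
          obtain ⟨hPb', hl'⟩ := Finset.mem_filter.1 hP'
          obtain ⟨hPart', hc'⟩ := hmem.1 hPb'
          have hQ : P.image downb = P'.image downb := congrArg Prod.fst h
          have hr := congrArg Prod.snd h
          have hch := Finset.choose_spec (fun B => Fin.last k ∈ B) P
            ((Finset.mem_filter.1 ((Finset.mem_filter.1 hP).1)).2.1.2 (Fin.last k))
          have hch' := Finset.choose_spec (fun B => Fin.last k ∈ B) P'
            ((Finset.mem_filter.1 ((Finset.mem_filter.1 hP').1)).2.1.2 (Fin.last k))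
          have hQpart := (downPart_gen hPart hl).1
          have hbminj := blockMax_injOn hQpart
          have hdmem : downb (P.choose (fun B => Fin.last k ∈ B) _) ∈ P.image downb :=
            Finset.mem_image_of_mem _ hch.1
          have hdmem' : downb (P'.choose (fun B => Fin.last k ∈ B)
              (hPart'.2 (Fin.last k))) ∈ P.image downb := by
            rw [hQ]
            exact Finset.mem_image_of_mem _ hch'.1
          have hr' : rank0 (P.image downb)
                (downb (P.choose (fun B => Fin.last k ∈ B) (hPart.2 (Fin.last k)))) =
              rank0 (P'.image downb)
                (downb (P'.choose (fun B => Fin.last k ∈ B) (hPart'.2 (Fin.last k)))) := hr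
          have heqd := rank0_inj hbminj hdmem hdmem' (hr'.trans (by rw [← hQ]))
          rw [recoverA1 hPart hl hch.1 hch.2, recoverA1 hPart' hl' hch'.1 hch'.2,
            ← hQ, ← heqd]
        · rintro ⟨Q, r⟩ hQr
          rw [Finset.mem_product] at hQr
          have hQm : Q ∈ Finset.univ.filter
              (fun Q : Finset (Finset (Fin k)) => IsSetPartition Q ∧ Q.card = t + 1) := hQr.1
          have hrm : r ∈ Finset.range (t + 1) := hQr.2
          obtain ⟨-, hQpart, hQc⟩ := Finset.mem_filter.1 hQm
          rw [Finset.mem_range] at hrm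
          obtain ⟨B, hB, hBr⟩ := rank0_surj (blockMax_injOn hQpart) (by omega : r < Q.card)
          obtain ⟨h1, h2, h3, h4⟩ := upPart_gen hQpart hB
          refine ⟨insert (insert (Fin.last k) (upb B)) ((Q.erase B).image upb), ?_, ?_⟩
          · refine Finset.mem_filter.2 ⟨hmem.2 ⟨h1, ?_⟩, h3⟩
            show (insert (insert (Fin.last k) (upb B)) ((Q.erase B).image upb)).card = t + 1
            omega
          · have hBin : insert (Fin.last k) (upb B) ∈
                insert (insert (Fin.last k) (upb B)) ((Q.erase B).image upb) :=
              Finset.mem_insert_self _ _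
            have hlin : Fin.last k ∈ insert (Fin.last k) (upb B) :=
              Finset.mem_insert_self _ _
            have hchooseq : (insert (insert (Fin.last k) (upb B))
                ((Q.erase B).image upb)).choose (fun C => Fin.last k ∈ C)
                (h1.2 (Fin.last k)) = insert (Fin.last k) (upb B) := by
              have hspec := Finset.choose_spec (fun C => Fin.last k ∈ C)
                (insert (insert (Fin.last k) (upb B)) ((Q.erase B).image upb))
                (h1.2 (Fin.last k))
              exact ExistsUnique.unique (h1.2 (Fin.last k)) hspec ⟨hBin, hlin⟩
            have hval : ((insert (insert (Fin.last k) (upb B)) ((Q.erase B).image upb)).image downb,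
                rank0 ((insert (insert (Fin.last k) (upb B)) ((Q.erase B).image upb)).image downb)
                  (downb ((insert (insert (Fin.last k) (upb B)) ((Q.erase B).image upb)).choose
                    (fun C => Fin.last k ∈ C) (h1.2 (Fin.last k))))) = (Q, r) := by
              rw [hchooseq, downb_insert_last, h4, hBr]
            exact hval
      rw [show stirling2 (k + 1) (t + 1) = (t + 1) * stirling2 k (t + 1) + stirling2 k t
          from rfl, ← ih, ← ih, ← hsplit, hA1, hA2, Finset.card_product, Finset.card_range]
      ring

/-- For `m ≤ k ≤ n/2` and `λ ⊢ n` with `λ* = μ ⊢ m` (`λ` minus its first row): the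
number of standard set-partition tableaux of shape `λ` with content a set partition of
`{1,…,k}` — pairs of a set partition `P` of `Fin k` and a bijective filling `T` of the
cells of `λ/[n - |P|]` by the blocks of `P`, increasing along rows and down columns in
max-entry order — equals `(∑_t S(k,t) C(t,m)) ⬝ f^{λ*}`. -/
theorem card_SSPT (k n m : ℕ) (hm : m ≤ k) (hn : 2 * k ≤ n)
    (lam : Nat.Partition n) (mu : Nat.Partition m)
    (hstar : (lam.parts.sort (· ≥ ·)).tail = mu.parts.sort (· ≥ ·)) :
    Nat.card
        ((P : {P : Finset (Finset (Fin k)) // IsSetPartition P}) ×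
          {T : {B : Finset (Fin k) // B ∈ P.1} → ℕ × ℕ //
            Set.BijOn T Set.univ ↑(skewCells lam P.1.card) ∧
            (∀ B B' : {B : Finset (Fin k) // B ∈ P.1},
              (T B).1 = (T B').1 → (T B).2 < (T B').2 →
                blockMax B.1 < blockMax B'.1) ∧
            (∀ B B' : {B : Finset (Fin k) // B ∈ P.1},
              (T B).2 = (T B').2 → (T B).1 < (T B').1 →
                blockMax B.1 < blockMax B'.1)}) =
      (∑ t ∈ Finset.range (k + 1), stirling2 k t * t.choose m) * fSYT m mu := by
  classical
  have hfin : ∀ P : {P : Finset (Finset (Fin k)) // IsSetPartition P},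
      Finite {T : {B : Finset (Fin k) // B ∈ P.1} → ℕ × ℕ //
        Set.BijOn T Set.univ ↑(skewCells lam P.1.card) ∧
        (∀ B B' : {B : Finset (Fin k) // B ∈ P.1},
          (T B).1 = (T B').1 → (T B).2 < (T B').2 → blockMax B.1 < blockMax B'.1) ∧
        (∀ B B' : {B : Finset (Fin k) // B ∈ P.1},
          (T B).2 = (T B').2 → (T B).1 < (T B').1 → blockMax B.1 < blockMax B'.1)} := by
    intro P
    apply Finite.of_injective (β := {B : Finset (Fin k) // B ∈ P.1} →
      {c : ℕ × ℕ // c ∈ skewCells lam P.1.card})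
      (f := fun T => fun b => ⟨T.1 b, Finset.mem_coe.1 (T.2.1.1 (Set.mem_univ b))⟩)
    intro T T' h
    apply Subtype.ext
    funext b
    exact congrArg Subtype.val (congrFun h b)
  letI : ∀ P : {P : Finset (Finset (Fin k)) // IsSetPartition P},
      Fintype {T : {B : Finset (Fin k) // B ∈ P.1} → ℕ × ℕ //
        Set.BijOn T Set.univ ↑(skewCells lam P.1.card) ∧
        (∀ B B' : {B : Finset (Fin k) // B ∈ P.1},
          (T B).1 = (T B').1 → (T B).2 < (T B').2 → blockMax B.1 < blockMax B'.1) ∧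
        (∀ B B' : {B : Finset (Fin k) // B ∈ P.1},
          (T B).2 = (T B').2 → (T B).1 < (T B').1 → blockMax B.1 < blockMax B'.1)} :=
    fun P => @Fintype.ofFinite _ (hfin P)
  rw [Nat.card_eq_fintype_card, Fintype.card_sigma]
  have hfib : ∀ P : {P : Finset (Finset (Fin k)) // IsSetPartition P},
      Fintype.card {T : {B : Finset (Fin k) // B ∈ P.1} → ℕ × ℕ //
        Set.BijOn T Set.univ ↑(skewCells lam P.1.card) ∧
        (∀ B B' : {B : Finset (Fin k) // B ∈ P.1},
          (T B).1 = (T B').1 → (T B).2 < (T B').2 → blockMax B.1 < blockMax B'.1) ∧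
        (∀ B B' : {B : Finset (Fin k) // B ∈ P.1},
          (T B).2 = (T B').2 → (T B).1 < (T B').1 → blockMax B.1 < blockMax B'.1)} =
      (P.1.card.choose m) * fSYT m mu := by
    intro P
    rw [← Nat.card_eq_fintype_card]
    exact card_fill lam mu hstar hm hn P.1 P.2
  rw [Finset.sum_congr rfl (fun P _ => hfib P)]
  -- group by number of blocks
  have hmaps : ∀ P ∈ (Finset.univ : Finset {P : Finset (Finset (Fin k)) // IsSetPartition P}),
      P.1.card ∈ Finset.range (k + 1) := by
    intro P _
    rw [Finset.mem_range]
    have := card_le_of_isSetPartition P.2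
    omega
  rw [← Finset.sum_fiberwise_of_maps_to hmaps]
  rw [Finset.sum_mul]
  refine Finset.sum_congr rfl ?_
  intro t _
  have hcount : (Finset.univ.filter
      (fun P : {P : Finset (Finset (Fin k)) // IsSetPartition P} => P.1.card = t)).card =
      stirling2 k t := by
    calc (Finset.univ.filter
        (fun P : {P : Finset (Finset (Fin k)) // IsSetPartition P} => P.1.card = t)).card
        = Fintype.card {P : {P : Finset (Finset (Fin k)) // IsSetPartition P} // P.1.card = t} :=
          (Fintype.card_subtype _).symm
      _ = Fintype.card {P : Finset (Finset (Fin k)) // IsSetPartition P ∧ P.card = t} :=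
          Fintype.card_congr (Equiv.subtypeSubtypeEquivSubtypeInter
            (fun P : Finset (Finset (Fin k)) => IsSetPartition P) (fun P => P.card = t))
      _ = Nat.card {P : Finset (Finset (Fin k)) // IsSetPartition P ∧ P.card = t} :=
          (Nat.card_eq_fintype_card).symm
      _ = stirling2 k t := card_parts k t
  calc ∑ P ∈ (Finset.univ.filter
      (fun P : {P : Finset (Finset (Fin k)) // IsSetPartition P} => P.1.card = t)),
        (P.1.card.choose m) * fSYT m mu
      = ∑ _P ∈ (Finset.univ.filter
        (fun P : {P : Finset (Finset (Fin k)) // IsSetPartition P} => P.1.card = t)),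
          (t.choose m) * fSYT m mu := by
        refine Finset.sum_congr rfl ?_
        intro P hP
        rw [(Finset.mem_filter.1 hP).2]
    _ = (Finset.univ.filter
        (fun P : {P : Finset (Finset (Fin k)) // IsSetPartition P} => P.1.card = t)).card *
          ((t.choose m) * fSYT m mu) := by
        rw [Finset.sum_const, smul_eq_mul]
    _ = stirling2 k t * t.choose m * fSYT m mu := by
        rw [hcount]
        ring
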